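/- The Apollonian group A_n is not a discrete subgroup of GL(n+2, ℝ) for n ≥ 4: the identity matrix is a limit point of the set {(S_1 S_2)^k : k ≥ 1} but this set does not contain the identity. -/

import Mathlib

open Matrix

/-- Descartes quadratic form matrix in dimension `n`. -/
noncomputable def QD (n : ℕ) : Matrix (Fin (n+2)) (Fin (n+2)) ℝ :=
  1 - (n : ℝ)⁻¹ • Matrix.of (fun _ _ => (1 : ℝ))

/-- Wilker quadratic form matrix in dimension `n`. -/
def QW (n : ℕ) : Matrix (Fin (n+2)) (Fin (n+2)) ℝ :=
  Matrix.of (fun i j =>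
    if (i = 0 ∧ j = 1) ∨ (i = 1 ∧ j = 0) then (-4 : ℝ)
    else if i = j then (if 2 ≤ (i : ℕ) then 2 else 0) else 0)

/-- Apollonian group generator `S j` in dimension `n`. -/
noncomputable def S (n : ℕ) (j : Fin (n+2)) : Matrix (Fin (n+2)) (Fin (n+2)) ℝ :=
  Matrix.of (fun i k =>
    if i = j then (if k = j then -1 else 2 / ((n : ℝ) - 1))
    else if i = k then 1 else 0)

/-- Dual Apollonian group generator `S j ^⊥` in dimension `n`. -/
def Sperp (n : ℕ) (j : Fin (n+2)) : Matrix (Fin (n+2)) (Fin (n+2)) ℝ :=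
  Matrix.of (fun i k =>
    if k = j then (if i = j then -1 else 2)
    else if i = k then 1 else 0)


/-!
Let `θ = 2 arccos (1 / (n - 1))`. The product `S₀ S₁` fixes an
`n`-dimensional subspace and acts on a complementary plane as a rotation by `θ`. Concretely, there
are matrices `U`, `V` spanning a copy of `ℂ` (`U² = U`, `UV = VU = V`, `V² = -U`) with
`S₀ S₁ = 1 + (cos θ - 1) U + (sin θ) V`, so `(S₀ S₁)ᵏ = 1 + (cos kθ - 1) U + (sin kθ) V`.
By Dirichlet's approximation theorem `kθ` comes arbitrarily close to `2πℤ`, which brings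
`(S₀ S₁)ᵏ` close to `1`; but `(S₀ S₁)ᵏ = 1` would force `θ ∈ πℚ`, and Niven's theorem rules this
out since `cos θ = 2 / (n - 1)² - 1` is rational and lies strictly between `-1` and `-1/2`.
-/

open Real Filter Topology Function

theorem Function.Periodic.exists_nat_mul_mem {X : Type*} [TopologicalSpace X] {f : ℝ → X}
    {T : ℝ} (hf : Periodic f T) (hT : 0 < T) (hcont : ContinuousAt f 0) (θ : ℝ) {s : Set X}
    (hs : s ∈ 𝓝 (f 0)) : ∃ k : ℕ, 1 ≤ k ∧ f (k * θ) ∈ s := by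
  obtain ⟨δ, hδ, hball⟩ := Metric.mem_nhds_iff.1 (hcont.preimage_mem_nhds hs)
  obtain ⟨N, hN⟩ := exists_nat_one_div_lt (div_pos hδ hT)
  obtain ⟨k, hk, -, hround⟩ := Real.exists_nat_abs_mul_sub_round_le (θ / T) N.succ_pos
  refine ⟨k, hk, ?_⟩
  rw [← hf.sub_int_mul_eq (round (k * (θ / T)))]
  apply hball
  rw [Metric.mem_ball, Real.dist_0_eq_abs]
  calc |k * θ - round (k * (θ / T)) * T| = T * |k * (θ / T) - round (k * (θ / T))| := by
        rw [← abs_of_pos hT, ← abs_mul, abs_of_pos hT]; congr 1; field_simp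
    _ ≤ T * (1 / (N + 1)) := by
        gcongr
        refine hround.trans (one_div_le_one_div_of_le (by positivity) ?_)
        push_cast; linarith
    _ < T * (δ / T) := by gcongr
    _ = δ := by field_simp

section ComplexPair

variable {A : Type*} [Ring A] [Algebra ℝ A]

/-- The span of `U` and `V` is a copy of `ℂ`, with unit `U` and imaginary unit `V`. -/
structure IsComplexPair (U V : A) : Prop where
  mul_self_fst : U * U = U
  fst_mul_snd : U * V = V
  snd_mul_fst : V * U = V
  mul_self_snd : V * V = -U

/-- Acts as rotation by `t` on the copy of `ℂ` spanned by `U` and `V`, and as the identity on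
`1 - U`. -/
noncomputable def complexRotation (U V : A) (t : ℝ) : A := 1 + (cos t - 1) • U + sin t • V

variable {U V : A}

@[simp]
theorem complexRotation_zero (U V : A) : complexRotation U V 0 = 1 := by
  simp [complexRotation]

theorem complexRotation_periodic (U V : A) : Periodic (complexRotation U V) (2 * π) := by
  intro t
  simp [complexRotation]

theorem continuous_complexRotation [TopologicalSpace A] [ContinuousAdd A]
    [ContinuousSMul ℝ A] (U V : A) : Continuous (complexRotation U V) := by
  unfold complexRotation
  fun_prop

namespace IsComplexPair

theorem complexRotation_add (h : IsComplexPair U V) (s t : ℝ) :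
    complexRotation U V (s + t) = complexRotation U V s * complexRotation U V t := by
  simp only [complexRotation, cos_add, sin_add, mul_add, add_mul, one_mul, mul_one,
    smul_mul_smul, h.mul_self_fst, h.fst_mul_snd, h.snd_mul_fst, h.mul_self_snd]
  module

theorem complexRotation_pow (h : IsComplexPair U V) (t : ℝ) (k : ℕ) :
    complexRotation U V t ^ k = complexRotation U V (k * t) := by
  induction k with
  | zero => simp
  | succ k ih => rw [pow_succ, ih, ← h.complexRotation_add]; push_cast; ring_nf

theorem cos_eq_one_of_complexRotation_eq_one (h : IsComplexPair U V) (hU : U ≠ 0) {t : ℝ}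
    (ht : complexRotation U V t = 1) : cos t = 1 := by
  set a := cos t - 1
  set b := sin t
  have h₁ : a • U + b • V = 0 := by
    simpa [complexRotation, add_assoc] using ht
  -- multiplying `h₁` by `V` and recombining isolates `(a ^ 2 + b ^ 2) • U`
  have h₂ : a • V - b • U = 0 := by
    have := congrArg (V * ·) h₁
    simpa [mul_add, h.snd_mul_fst, h.mul_self_snd, sub_eq_add_neg] using this
  have h₃ : (a ^ 2 + b ^ 2) • U = 0 := by
    calc (a ^ 2 + b ^ 2) • U = a • (a • U + b • V) - b • (a • V - b • U) := by module
      _ = 0 := by rw [h₁, h₂]; simp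
  have ha : a = 0 := by
    have := (smul_eq_zero.1 h₃).resolve_right hU
    nlinarith [sq_nonneg a, sq_nonneg b]
  linarith

theorem complexRotation_pow_ne_one (h : IsComplexPair U V) (hU : U ≠ 0) {t : ℝ}
    (ht : Irrational (t / π)) {k : ℕ} (hk : k ≠ 0) : complexRotation U V t ^ k ≠ 1 := by
  intro hpow
  rw [h.complexRotation_pow] at hpow
  obtain ⟨m, hm⟩ := (cos_eq_one_iff _).1 (h.cos_eq_one_of_complexRotation_eq_one hU hpow)
  refine ht ⟨2 * m / k, ?_⟩
  push_cast
  rw [div_eq_div_iff (by exact_mod_cast hk) pi_ne_zero]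
  linarith

theorem exists_complexRotation_pow_mem [TopologicalSpace A] [ContinuousAdd A]
    [ContinuousSMul ℝ A] (h : IsComplexPair U V) (t : ℝ) {s : Set A} (hs : s ∈ 𝓝 1) :
    ∃ k : ℕ, 1 ≤ k ∧ complexRotation U V t ^ k ∈ s := by
  obtain ⟨k, hk, hmem⟩ := (complexRotation_periodic U V).exists_nat_mul_mem two_pi_pos
    (continuous_complexRotation U V).continuousAt t (by rwa [complexRotation_zero])
  exact ⟨k, hk, by rwa [h.complexRotation_pow]⟩

end IsComplexPair

end ComplexPair

theorem Matrix.setOf_forall_abs_sub_lt_mem_nhds {ι κ : Type*} [Fintype ι] [Fintype κ]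
    (B : Matrix ι κ ℝ) {ε : ℝ} (hε : 0 < ε) :
    {A : Matrix ι κ ℝ | ∀ i j, |A i j - B i j| < ε} ∈ 𝓝 B := by
  refine eventually_all.2 fun i => eventually_all.2 fun j => ?_
  filter_upwards [((continuous_apply_apply i j).tendsto B).eventually
    (Metric.ball_mem_nhds _ hε)] with A hA
  exact hA

theorem Fin.eq_zero_or_eq_one_or_exists_eq_succ_succ {m : ℕ} (i : Fin (m + 2)) :
    i = 0 ∨ i = 1 ∨ ∃ l : Fin m, i = l.succ.succ := by
  cases i using Fin.cases with
  | zero => exact .inl rfl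
  | succ i =>
    cases i using Fin.cases with
    | zero => exact .inr (.inl rfl)
    | succ l => exact .inr (.inr ⟨l, rfl⟩)

theorem Matrix.mul_apply_eq_of_succ_succ_row_eq_zero {α : Type*} [NonUnitalNonAssocSemiring α]
    {m : ℕ} (A B : Matrix (Fin (m + 2)) (Fin (m + 2)) α)
    (hB : ∀ (l : Fin m) k, B l.succ.succ k = 0) (i k : Fin (m + 2)) :
    (A * B) i k = A i 0 * B 0 k + A i 1 * B 1 k := by
  simp [mul_apply, Fin.sum_univ_succ, hB]

namespace Apollonian

/-- With `a = 2 / (n - 1)`, `U` is the projection onto `span {e₀, e₁}` along the fixed space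
of `S₀ S₁`, and `S₀ S₁ = 1 + (a ^ 2 / 2 - 2) • U + W`. -/
noncomputable def U (m : ℕ) (a : ℝ) : Matrix (Fin (m + 2)) (Fin (m + 2)) ℝ := of fun i k =>
  if i = 0 then (if k = 0 then 1 else if k = 1 then 0 else a / (a - 2))
  else if i = 1 then (if k = 0 then 0 else if k = 1 then 1 else a / (a - 2))
  else 0

noncomputable def W (m : ℕ) (a : ℝ) : Matrix (Fin (m + 2)) (Fin (m + 2)) ℝ := of fun i k =>
  if i = 0 then (if k = 1 then -a else a ^ 2 / 2)
  else if i = 1 then (if k = 0 then a else -(a ^ 2 / 2))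
  else 0

variable {m : ℕ} {a : ℝ}

theorem U_succ_succ (l : Fin m) (k : Fin (m + 2)) : U m a l.succ.succ k = 0 := by
  simp [U, Fin.succ_succ_ne_one]

theorem W_succ_succ (l : Fin m) (k : Fin (m + 2)) : W m a l.succ.succ k = 0 := by
  simp [W, Fin.succ_succ_ne_one]

theorem U_ne_zero : U m a ≠ 0 := fun h => by simpa [U] using congrFun₂ h 0 0

theorem U_mul_U : U m a * U m a = U m a := by
  ext i k
  rw [mul_apply_eq_of_succ_succ_row_eq_zero _ _ U_succ_succ]
  rcases Fin.eq_zero_or_eq_one_or_exists_eq_succ_succ i with rfl | rfl | ⟨l, rfl⟩ <;>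
  rcases Fin.eq_zero_or_eq_one_or_exists_eq_succ_succ k with rfl | rfl | ⟨l', rfl⟩ <;>
  simp [U, Fin.succ_succ_ne_one]

theorem U_mul_W : U m a * W m a = W m a := by
  ext i k
  rw [mul_apply_eq_of_succ_succ_row_eq_zero _ _ W_succ_succ]
  rcases Fin.eq_zero_or_eq_one_or_exists_eq_succ_succ i with rfl | rfl | ⟨l, rfl⟩ <;>
  rcases Fin.eq_zero_or_eq_one_or_exists_eq_succ_succ k with rfl | rfl | ⟨l', rfl⟩ <;>
  simp [U, W, Fin.succ_succ_ne_one]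

theorem W_mul_U (ha : a ≠ 2) : W m a * U m a = W m a := by
  have : a - 2 ≠ 0 := sub_ne_zero.2 ha
  ext i k
  rw [mul_apply_eq_of_succ_succ_row_eq_zero _ _ U_succ_succ]
  rcases Fin.eq_zero_or_eq_one_or_exists_eq_succ_succ i with rfl | rfl | ⟨l, rfl⟩ <;>
  rcases Fin.eq_zero_or_eq_one_or_exists_eq_succ_succ k with rfl | rfl | ⟨l', rfl⟩ <;>
  simp only [U, W, of_apply, one_ne_zero, zero_ne_one, Fin.succ_ne_zero, Fin.succ_succ_ne_one,
    ↓reduceIte] <;> field_simp <;> ring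

theorem W_mul_W (ha : a ≠ 2) : W m a * W m a = -(a ^ 2 * (4 - a ^ 2) / 4) • U m a := by
  have : a - 2 ≠ 0 := sub_ne_zero.2 ha
  ext i k
  rw [mul_apply_eq_of_succ_succ_row_eq_zero _ _ W_succ_succ]
  rcases Fin.eq_zero_or_eq_one_or_exists_eq_succ_succ i with rfl | rfl | ⟨l, rfl⟩ <;>
  rcases Fin.eq_zero_or_eq_one_or_exists_eq_succ_succ k with rfl | rfl | ⟨l', rfl⟩ <;>
  simp only [U, W, of_apply, Matrix.smul_apply, smul_eq_mul, one_ne_zero, zero_ne_one,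
    Fin.succ_ne_zero, Fin.succ_succ_ne_one, ↓reduceIte] <;> field_simp <;> ring

noncomputable def coeff (n : ℕ) : ℝ := 2 / ((n : ℝ) - 1)

theorem S_apply (n : ℕ) (j i k : Fin (n + 2)) :
    S n j i k = if i = j then (if k = j then -1 else coeff n) else if i = k then 1 else 0 := rfl

theorem S_zero_mul_S_one {n : ℕ} (hc : coeff n ≠ 2) :
    S n 0 * S n 1 = 1 + (coeff n ^ 2 / 2 - 2) • U n (coeff n) + W n (coeff n) := by
  have : coeff n - 2 ≠ 0 := sub_ne_zero.2 hc
  ext i k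
  simp only [mul_apply, Fin.sum_univ_succ, S_apply]
  rcases Fin.eq_zero_or_eq_one_or_exists_eq_succ_succ i with rfl | rfl | ⟨l, rfl⟩ <;>
  rcases Fin.eq_zero_or_eq_one_or_exists_eq_succ_succ k with rfl | rfl | ⟨l', rfl⟩ <;>
  simp only [U, W, one_apply, of_apply, Matrix.add_apply, smul_of, Pi.smul_apply, smul_eq_mul,
    Fin.succ_zero_eq_one, Fin.succ_ne_zero, (Fin.succ_ne_zero _).symm, Fin.succ_succ_ne_one,
    (Fin.succ_succ_ne_one _).symm, Fin.succ_inj, one_ne_zero, zero_ne_one, ↓reduceIte, mul_ite,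
    mul_zero, mul_one, Finset.sum_ite_eq', Finset.mem_univ, Finset.sum_const_zero, add_zero,
    zero_add] <;> field_simp <;> ring

noncomputable def angle (n : ℕ) : ℝ := 2 * arccos (1 / ((n : ℝ) - 1))

noncomputable def V (n : ℕ) : Matrix (Fin (n + 2)) (Fin (n + 2)) ℝ :=
  (sin (angle n))⁻¹ • W n (coeff n)

variable {n : ℕ}

theorem coeff_pos (hn : 2 ≤ n) : 0 < coeff n := by
  have : (2 : ℝ) ≤ n := by exact_mod_cast hn
  unfold coeff
  apply div_pos <;> linarith

theorem coeff_le_one (hn : 3 ≤ n) : coeff n ≤ 1 := by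
  have : (3 : ℝ) ≤ n := by exact_mod_cast hn
  rw [coeff, div_le_one] <;> linarith

theorem cos_angle (hn : 2 ≤ n) : cos (angle n) = coeff n ^ 2 / 2 - 1 := by
  have : (2 : ℝ) ≤ n := by exact_mod_cast hn
  have hpos : 0 < 1 / ((n : ℝ) - 1) := by apply div_pos <;> linarith
  have hle : 1 / ((n : ℝ) - 1) ≤ 1 := by rw [div_le_one] <;> linarith
  rw [angle, cos_two_mul, cos_arccos (by linarith) hle, coeff]
  ring

theorem sin_angle_sq (hn : 2 ≤ n) : sin (angle n) ^ 2 = coeff n ^ 2 * (4 - coeff n ^ 2) / 4 := by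
  rw [sin_sq, cos_angle hn]
  ring

theorem sin_angle_ne_zero (hn : 3 ≤ n) : sin (angle n) ≠ 0 := by
  have h₀ := coeff_pos (by omega : 2 ≤ n)
  have h₁ := coeff_le_one hn
  rw [← pow_ne_zero_iff two_ne_zero, sin_angle_sq (by omega)]
  have : 0 < 4 - coeff n ^ 2 := by nlinarith
  positivity

theorem isComplexPair_U_V (hn : 3 ≤ n) : IsComplexPair (U n (coeff n)) (V n) := by
  have hc : coeff n ≠ 2 := by linarith [coeff_le_one hn]
  have hs := sin_angle_ne_zero hn
  refine ⟨U_mul_U, ?_, ?_, ?_⟩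
  · rw [V, mul_smul_comm, U_mul_W]
  · rw [V, smul_mul_assoc, W_mul_U hc]
  · rw [V, smul_mul_smul, W_mul_W hc, ← sin_angle_sq (by omega), smul_smul,
      show (sin (angle n))⁻¹ * (sin (angle n))⁻¹ * -sin (angle n) ^ 2 = -1 by field_simp,
      neg_one_smul]

theorem S_zero_mul_S_one_eq_complexRotation (hn : 3 ≤ n) :
    S n 0 * S n 1 = complexRotation (U n (coeff n)) (V n) (angle n) := by
  have hc : coeff n ≠ 2 := by linarith [coeff_le_one hn]
  rw [S_zero_mul_S_one hc, complexRotation, cos_angle (by omega), V, smul_smul,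
    mul_inv_cancel₀ (sin_angle_ne_zero hn), one_smul]
  ring_nf

theorem irrational_angle_div_pi (hn : 4 ≤ n) : Irrational (angle n / π) := by
  rintro ⟨r, hr⟩
  have hθ : angle n = r * π := by rw [hr]; field_simp
  have hq : ∃ q : ℚ, cos (angle n) = q :=
    ⟨2 / ((n : ℚ) - 1) ^ 2 - 1, by rw [cos_angle (by omega), coeff, div_pow]; push_cast; ring⟩
  have h₀ := coeff_pos (by omega : 2 ≤ n)
  have h₁ : coeff n ≤ 2 / 3 := by
    have : (4 : ℝ) ≤ n := by exact_mod_cast hn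
    rw [coeff, div_le_div_iff₀] <;> linarith
  have h := niven ⟨r, hθ⟩ hq
  simp only [cos_angle (by omega : 2 ≤ n), Set.mem_insert_iff, Set.mem_singleton_iff] at h
  rcases h with h | h | h | h | h <;> nlinarith

end Apollonian

theorem apollonian_not_discrete (n : ℕ) (hn : 4 ≤ n) :
    (∀ k : ℕ, 1 ≤ k → (S n 0 * S n 1) ^ k ≠ 1) ∧
    (∀ ε : ℝ, 0 < ε → ∃ k : ℕ, 1 ≤ k ∧
      ∀ i j : Fin (n+2), |((S n 0 * S n 1) ^ k) i j - (1 : Matrix (Fin (n+2)) (Fin (n+2)) ℝ) i j| < ε) := by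
  have hM := Apollonian.S_zero_mul_S_one_eq_complexRotation (n := n) (by omega)
  have hUV := Apollonian.isComplexPair_U_V (n := n) (by omega)
  refine ⟨fun k hk => ?_, fun ε hε => ?_⟩
  · rw [hM]
    exact hUV.complexRotation_pow_ne_one Apollonian.U_ne_zero
      (Apollonian.irrational_angle_div_pi hn) (by omega)
  · rw [hM]
    exact hUV.exists_complexRotation_pow_mem _ (Matrix.setOf_forall_abs_sub_lt_mem_nhds 1 hε)
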